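/- Let s > 1/2 and M ≥ 0, and let c : ℤ⁴ → ℂ satisfy c(i,j,k,ℓ) = 0 whenever i + j ≠ k + ℓ and |c(i,j,k,ℓ)| ≤ M for all (i,j,k,ℓ). There exists a constant C_s > 0, depending only on s, such that for all a, b, a', b' ∈ ℓ²_s: for every ℓ ∈ ℤ the sum w_ℓ = Σ_{(i,j,k): i+j=k+ℓ} c(i,j,k,ℓ) a_i b_j a'_k converges absolutely, the sequence w = (w_ℓ)_{ℓ∈ℤ} belongs to ℓ²_s, and ‖w‖_s ≤ C_s M ‖a‖_s ‖b‖_s ‖a'‖_s. (This is the key estimate showing that the Hamiltonian vector field of a quartic polynomial with bounded coefficients and zero momentum is an analytic cubic map of ℓ²_s.) -/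

import Mathlib

/-!
Write `V k = (1 + k²)^(s/2)`. Since `ℓ = i + j - k`, `V ℓ ≤ 3^s (V i + V j + V k)`, so the weight
on `w_ℓ` can be moved onto one of the three factors: `V ℓ |w_ℓ|` is at most `3^s M` times a sum of
three trilinear convolutions of `|a|, |b|, |a'|`, each with `V` on one factor. By Young's
inequality `ℓ² ⋆ ℓ¹ ⋆ ℓ¹ ⊆ ℓ²` (weighted Cauchy–Schwarz and translation invariance of the sums)
each is bounded in `ℓ²` by the `ℓ²_s` norm of the weighted factor times the `ℓ¹` norms of the
other two, and for `s > 1/2` Cauchy–Schwarz against the summable `V⁻²` gives `ℓ²_s ⊆ ℓ¹`.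
All sums are taken in `ℝ≥0∞`, where they always exist, and brought back to `ℝ` at the end.
-/

open scoped ENNReal

theorem ENNReal.sq_sum_mul_le_sum_mul_sum_mul_sq {ι : Type*} (s : Finset ι) (w f : ι → ℝ≥0∞) :
    (∑ i ∈ s, w i * f i) ^ 2 ≤ (∑ i ∈ s, w i) * ∑ i ∈ s, w i * f i ^ 2 := by
  have h := ENNReal.inner_le_weight_mul_Lp_of_nonneg s one_le_two w f
  calc (∑ i ∈ s, w i * f i) ^ 2
      ≤ ((∑ i ∈ s, w i) ^ (2⁻¹ : ℝ) * (∑ i ∈ s, w i * f i ^ 2) ^ (2⁻¹ : ℝ)) ^ 2 := by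
        gcongr
        convert h using 3 <;> norm_num [ENNReal.rpow_two]
    _ = _ := by
        rw [mul_pow, ← ENNReal.rpow_mul_natCast, ← ENNReal.rpow_mul_natCast]
        norm_num

theorem ENNReal.sq_tsum_mul_le_tsum_mul_tsum_mul_sq {ι : Type*} (w f : ι → ℝ≥0∞) :
    (∑' i, w i * f i) ^ 2 ≤ (∑' i, w i) * ∑' i, w i * f i ^ 2 := by
  rw [ENNReal.tsum_eq_iSup_sum, ENNReal.iSup_pow]
  exact iSup_le fun s => (ENNReal.sq_sum_mul_le_sum_mul_sum_mul_sq s w f).trans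
    (mul_le_mul' (ENNReal.sum_le_tsum s) (ENNReal.sum_le_tsum s))

theorem ENNReal.add_add_sq_le (a b c : ℝ≥0∞) : (a + b + c) ^ 2 ≤ 3 * (a ^ 2 + b ^ 2 + c ^ 2) := by
  simpa [Fin.sum_univ_three, add_assoc] using
    ENNReal.sq_sum_mul_le_sum_mul_sum_mul_sq Finset.univ (fun _ : Fin 3 => 1) ![a, b, c]

theorem ENNReal.add_add_rpow_le {r : ℝ} (hr : 0 ≤ r) (a b c : ℝ≥0∞) :
    (a + b + c) ^ r ≤ 3 ^ r * (a ^ r + b ^ r + c ^ r) := by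
  set m := max (max a b) c
  have hsum : a + b + c ≤ 3 * m := by
    calc a + b + c ≤ m + m + m := by gcongr <;> simp [m]
      _ = 3 * m := by ring
  have hmono := ENNReal.monotone_rpow_of_nonneg hr
  have hmax : m ^ r ≤ a ^ r + b ^ r + c ^ r := by
    simp only [m, hmono.map_max]
    exact max_le (max_le (le_add_right le_self_add) (le_add_right le_add_self)) le_add_self
  calc (a + b + c) ^ r ≤ (3 * m) ^ r := hmono hsum
    _ = 3 ^ r * m ^ r := ENNReal.mul_rpow_of_nonneg _ _ hr
    _ ≤ _ := by gcongr

theorem ENNReal.tsum_prod_mul {α β : Type*} (f : α → ℝ≥0∞) (g : β → ℝ≥0∞) :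
    ∑' p : α × β, f p.1 * g p.2 = (∑' a, f a) * ∑' b, g b := by
  rw [ENNReal.tsum_prod']
  simp_rw [ENNReal.tsum_mul_left, ENNReal.tsum_mul_right]

theorem tsum_sub_left {G α : Type*} [AddGroup G] [AddCommMonoid α] [TopologicalSpace α]
    (h : G → α) (m : G) : ∑' l, h (m - l) = ∑' l, h l :=
  (Equiv.subLeft m).tsum_eq h

theorem summable_and_tsum_le_of_tsum_ofReal_le {ι : Type*} {f : ι → ℝ} (hf : ∀ i, 0 ≤ f i)
    {R : ℝ} (hR : 0 ≤ R) (h : ∑' i, ENNReal.ofReal (f i) ≤ ENNReal.ofReal R) :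
    Summable f ∧ ∑' i, f i ≤ R := by
  have hsum : Summable f := by
    simpa [ENNReal.toReal_ofReal (hf _)] using
      ENNReal.summable_toReal (ne_top_of_le_ne_top ENNReal.ofReal_ne_top h)
  refine ⟨hsum, ?_⟩
  rwa [← ENNReal.ofReal_tsum_of_nonneg hf hsum, ENNReal.ofReal_le_ofReal_iff hR] at h

namespace QuarticVectorField

variable {s : ℝ}

noncomputable def tripleConv (f g h : ℤ → ℝ≥0∞) (l : ℤ) : ℝ≥0∞ :=
  ∑' p : ℤ × ℤ, f p.1 * g p.2 * h (p.1 + p.2 - l)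

theorem tripleConv_comm (f g h : ℤ → ℝ≥0∞) : tripleConv f g h = tripleConv g f h := by
  funext l
  rw [tripleConv, ← (Equiv.prodComm ℤ ℤ).tsum_eq]
  simp [tripleConv, mul_comm (f _), add_comm]

theorem tsum_prod_mul_shift (g h : ℤ → ℝ≥0∞) (l : ℤ) :
    ∑' p : ℤ × ℤ, g p.2 * h (p.1 + p.2 - l) = (∑' i, g i) * ∑' i, h i := by
  rw [ENNReal.tsum_prod', ENNReal.tsum_comm, ← ENNReal.tsum_mul_right]
  refine tsum_congr fun j => ?_
  dsimp only
  rw [ENNReal.tsum_mul_left, ← (Equiv.addRight (j - l)).tsum_eq h]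
  simp [add_sub_assoc]

theorem tsum_sq_tripleConv_le_left (u g h : ℤ → ℝ≥0∞) :
    ∑' l, tripleConv u g h l ^ 2 ≤ (∑' i, u i ^ 2) * (∑' i, g i) ^ 2 * (∑' i, h i) ^ 2 := by
  set N := (∑' i, g i) * ∑' i, h i
  have hpt (l : ℤ) : tripleConv u g h l ^ 2
      ≤ N * ∑' p : ℤ × ℤ, g p.2 * h (p.1 + p.2 - l) * u p.1 ^ 2 := by
    have := ENNReal.sq_tsum_mul_le_tsum_mul_tsum_mul_sq
      (fun p : ℤ × ℤ => g p.2 * h (p.1 + p.2 - l)) (fun p => u p.1)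
    rw [tsum_prod_mul_shift] at this
    convert this using 2
    exact tsum_congr fun p => by ring
  calc ∑' l, tripleConv u g h l ^ 2
      ≤ ∑' l, N * ∑' p : ℤ × ℤ, g p.2 * h (p.1 + p.2 - l) * u p.1 ^ 2 := ENNReal.tsum_le_tsum hpt
    _ = N * ∑' p : ℤ × ℤ, u p.1 ^ 2 * g p.2 * ∑' l, h (p.1 + p.2 - l) := by
        rw [ENNReal.tsum_mul_left, ENNReal.tsum_comm]
        congr 1
        refine tsum_congr fun p => ?_
        rw [← ENNReal.tsum_mul_left]
        exact tsum_congr fun l => by ring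
    _ = (∑' i, u i ^ 2) * (∑' i, g i) ^ 2 * (∑' i, h i) ^ 2 := by
        simp_rw [tsum_sub_left, ENNReal.tsum_mul_right, ENNReal.tsum_prod_mul (fun i => u i ^ 2) g]
        ring

theorem tsum_sq_tripleConv_le_right (g h u : ℤ → ℝ≥0∞) :
    ∑' l, tripleConv g h u l ^ 2 ≤ (∑' i, u i ^ 2) * (∑' i, g i) ^ 2 * (∑' i, h i) ^ 2 := by
  set N := (∑' i, g i) * ∑' i, h i
  have hpt (l : ℤ) : tripleConv g h u l ^ 2
      ≤ N * ∑' p : ℤ × ℤ, g p.1 * h p.2 * u (p.1 + p.2 - l) ^ 2 := by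
    have := ENNReal.sq_tsum_mul_le_tsum_mul_tsum_mul_sq
      (fun p : ℤ × ℤ => g p.1 * h p.2) (fun p => u (p.1 + p.2 - l))
    rwa [ENNReal.tsum_prod_mul] at this
  calc ∑' l, tripleConv g h u l ^ 2
      ≤ ∑' l, N * ∑' p : ℤ × ℤ, g p.1 * h p.2 * u (p.1 + p.2 - l) ^ 2 := ENNReal.tsum_le_tsum hpt
    _ = N * ∑' p : ℤ × ℤ, g p.1 * h p.2 * ∑' l, u (p.1 + p.2 - l) ^ 2 := by
        rw [ENNReal.tsum_mul_left, ENNReal.tsum_comm]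
        simp_rw [ENNReal.tsum_mul_left]
    _ = (∑' i, u i ^ 2) * (∑' i, g i) ^ 2 * (∑' i, h i) ^ 2 := by
        simp_rw [tsum_sub_left (fun k => u k ^ 2), ENNReal.tsum_mul_right,
          ENNReal.tsum_prod_mul g h]
        ring

noncomputable def sobolevWeight (s : ℝ) (k : ℤ) : ℝ≥0∞ :=
  ENNReal.ofReal (1 + (k : ℝ) ^ 2) ^ (s / 2)

noncomputable def weightedSqSum (s : ℝ) (f : ℤ → ℝ≥0∞) : ℝ≥0∞ :=
  ∑' k, (sobolevWeight s k * f k) ^ 2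

theorem ofReal_one_add_sq_pos (k : ℤ) : 0 < ENNReal.ofReal (1 + (k : ℝ) ^ 2) :=
  ENNReal.ofReal_pos.2 (by positivity)

theorem sobolevWeight_pos (s : ℝ) (k : ℤ) : 0 < sobolevWeight s k :=
  ENNReal.rpow_pos (ofReal_one_add_sq_pos k) ENNReal.ofReal_ne_top

theorem sobolevWeight_ne_top (s : ℝ) (k : ℤ) : sobolevWeight s k ≠ ∞ := by
  rw [sobolevWeight, Ne, ENNReal.rpow_eq_top_iff]
  simp [(ofReal_one_add_sq_pos k).ne']

theorem one_le_sobolevWeight (hs : 0 ≤ s) (k : ℤ) : 1 ≤ sobolevWeight s k := by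
  rw [← ENNReal.one_rpow (s / 2), sobolevWeight]
  gcongr
  rw [← ENNReal.ofReal_one]
  exact ENNReal.ofReal_le_ofReal (le_add_of_nonneg_right (sq_nonneg _))

theorem sobolevWeight_sq (s : ℝ) (k : ℤ) :
    sobolevWeight s k ^ 2 = ENNReal.ofReal ((1 + (k : ℝ) ^ 2) ^ s) := by
  rw [sobolevWeight, ← ENNReal.rpow_mul_natCast, ENNReal.ofReal_rpow_of_pos (by positivity)]
  norm_num

theorem sobolevWeight_sub_le (hs : 0 ≤ s) (i j k : ℤ) :
    sobolevWeight s (i + j - k) ≤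
      3 ^ s * (sobolevWeight s i + sobolevWeight s j + sobolevWeight s k) := by
  set X : ℤ → ℝ≥0∞ := fun n => ENNReal.ofReal (1 + (n : ℝ) ^ 2)
  have hbase : X (i + j - k) ≤ 3 * (X i + X j + X k) := by
    have h3 : 3 * (X i + X j + X k) =
        ENNReal.ofReal (3 * ((1 + (i : ℝ) ^ 2) + (1 + (j : ℝ) ^ 2) + (1 + (k : ℝ) ^ 2))) := by
      rw [ENNReal.ofReal_mul (by norm_num), ENNReal.ofReal_add (by positivity) (by positivity),
        ENNReal.ofReal_add (by positivity) (by positivity)]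
      simp [X]
    rw [h3]
    refine ENNReal.ofReal_le_ofReal ?_
    push_cast
    nlinarith [sq_nonneg ((i : ℝ) - j), sq_nonneg ((i : ℝ) + k), sq_nonneg ((j : ℝ) + k)]
  have hs2 : 0 ≤ s / 2 := by positivity
  calc sobolevWeight s (i + j - k) ≤ (3 * (X i + X j + X k)) ^ (s / 2) :=
        ENNReal.rpow_le_rpow hbase hs2
    _ = 3 ^ (s / 2) * (X i + X j + X k) ^ (s / 2) := ENNReal.mul_rpow_of_nonneg _ _ hs2
    _ ≤ 3 ^ (s / 2) * (3 ^ (s / 2) * (sobolevWeight s i + sobolevWeight s j + sobolevWeight s k)) :=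
        by gcongr; exact ENNReal.add_add_rpow_le hs2 _ _ _
    _ = 3 ^ s * (sobolevWeight s i + sobolevWeight s j + sobolevWeight s k) := by
        rw [← mul_assoc, ← ENNReal.rpow_add _ _ (by norm_num) (by norm_num), add_halves]

theorem summable_one_add_sq_rpow_neg (hs : 1 / 2 < s) :
    Summable fun k : ℤ => (1 + (k : ℝ) ^ 2) ^ (-s) := by
  refine Summable.of_norm_bounded_eventually
    (Real.summable_abs_int_rpow (by linarith : 1 < 2 * s)) ?_
  filter_upwards [Filter.eventually_cofinite_ne 0] with k hk
  have hk2 : 0 < (k : ℝ) ^ 2 := by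
    have : (k : ℝ) ≠ 0 := by exact_mod_cast hk
    positivity
  rw [Real.norm_of_nonneg (by positivity)]
  calc (1 + (k : ℝ) ^ 2) ^ (-s) ≤ ((k : ℝ) ^ 2) ^ (-s) :=
        Real.rpow_le_rpow_of_nonpos hk2 (by linarith) (by linarith)
    _ = |(k : ℝ)| ^ (-(2 * s)) := by
        rw [← sq_abs, ← Real.rpow_natCast, ← Real.rpow_mul (abs_nonneg _)]
        ring_nf

theorem tsum_inv_sobolevWeight_sq_ne_top (hs : 1 / 2 < s) :
    ∑' k, (sobolevWeight s k ^ 2)⁻¹ ≠ ∞ := by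
  have hk (k : ℤ) : (sobolevWeight s k ^ 2)⁻¹ = ENNReal.ofReal ((1 + (k : ℝ) ^ 2) ^ (-s)) := by
    rw [sobolevWeight_sq, ← ENNReal.ofReal_inv_of_pos (by positivity),
      Real.rpow_neg (by positivity)]
  simp_rw [hk, ← ENNReal.ofReal_tsum_of_nonneg (fun k => by positivity)
    (summable_one_add_sq_rpow_neg hs)]
  exact ENNReal.ofReal_ne_top

theorem sq_tsum_le_tsum_inv_sobolevWeight_sq_mul (s : ℝ) (x : ℤ → ℝ≥0∞) :
    (∑' k, x k) ^ 2 ≤ (∑' k, (sobolevWeight s k ^ 2)⁻¹) * weightedSqSum s x := by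
  have hV0 (k : ℤ) : sobolevWeight s k ^ 2 ≠ 0 := pow_ne_zero _ (sobolevWeight_pos s k).ne'
  have hVt (k : ℤ) : sobolevWeight s k ^ 2 ≠ ∞ := ENNReal.pow_ne_top (sobolevWeight_ne_top s k)
  have := ENNReal.sq_tsum_mul_le_tsum_mul_tsum_mul_sq
    (fun k => (sobolevWeight s k ^ 2)⁻¹) (fun k => sobolevWeight s k ^ 2 * x k)
  simp_rw [ENNReal.inv_mul_cancel_left (hV0 _) (hVt _)] at this
  refine this.trans_eq (congrArg _ (tsum_congr fun k => ?_))
  rw [show (sobolevWeight s k ^ 2 * x k) ^ 2 =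
      sobolevWeight s k ^ 2 * (sobolevWeight s k * x k) ^ 2 by ring,
    ENNReal.inv_mul_cancel_left (hV0 k) (hVt k)]

theorem sobolevWeight_mul_tripleConv_le (hs : 0 ≤ s) (f g h : ℤ → ℝ≥0∞) (l : ℤ) :
    sobolevWeight s l * tripleConv f g h l ≤
      3 ^ s * (tripleConv (fun k => sobolevWeight s k * f k) g h l +
        tripleConv f (fun k => sobolevWeight s k * g k) h l +
        tripleConv f g (fun k => sobolevWeight s k * h k) l) := by
  simp only [tripleConv, ← ENNReal.tsum_add, ← ENNReal.tsum_mul_left]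
  refine ENNReal.tsum_le_tsum fun p => ?_
  have hV := sobolevWeight_sub_le hs p.1 p.2 (p.1 + p.2 - l)
  rw [sub_sub_cancel] at hV
  calc sobolevWeight s l * (f p.1 * g p.2 * h (p.1 + p.2 - l))
      ≤ 3 ^ s * (sobolevWeight s p.1 + sobolevWeight s p.2 + sobolevWeight s (p.1 + p.2 - l)) *
          (f p.1 * g p.2 * h (p.1 + p.2 - l)) := by gcongr
    _ = _ := by ring

-- Squared, this is `(3 ^ s) ^ 2 * 3 * (3 * K ^ 2)` with `K` the sum below: `3 ^ s` from
-- `sobolevWeight_sub_le`, `3` from squaring a sum of three terms, and `3 * K ^ 2` from the three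
-- Young terms, each of which uses `ℓ²_s ⊆ ℓ¹` twice.
noncomputable def vectorFieldConst (s : ℝ) : ℝ≥0∞ :=
  3 ^ (s + 1) * ∑' k, (sobolevWeight s k ^ 2)⁻¹

theorem vectorFieldConst_ne_zero (s : ℝ) : vectorFieldConst s ≠ 0 := by
  refine mul_ne_zero (by simp [ENNReal.rpow_eq_zero_iff]) fun h => ?_
  exact ENNReal.inv_ne_zero.2 (ENNReal.pow_ne_top (sobolevWeight_ne_top s 0))
    (ENNReal.tsum_eq_zero.1 h 0)

theorem vectorFieldConst_ne_top (hs : 1 / 2 < s) : vectorFieldConst s ≠ ∞ :=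
  ENNReal.mul_ne_top (ENNReal.rpow_ne_top_of_nonneg (by linarith) (by norm_num))
    (tsum_inv_sobolevWeight_sq_ne_top hs)

theorem weightedSqSum_tripleConv_le (hs : 0 ≤ s) (f g h : ℤ → ℝ≥0∞) :
    weightedSqSum s (tripleConv f g h) ≤
      vectorFieldConst s ^ 2 * (weightedSqSum s f * weightedSqSum s g * weightedSqSum s h) := by
  set V := sobolevWeight s
  set K := ∑' k, (V k ^ 2)⁻¹
  set T₁ := tripleConv (fun k => V k * f k) g h
  set T₂ := tripleConv f (fun k => V k * g k) h
  set T₃ := tripleConv f g (fun k => V k * h k)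
  set Sf := weightedSqSum s f
  set Sg := weightedSqSum s g
  set Sh := weightedSqSum s h
  have h₁ : ∑' l, T₁ l ^ 2 ≤ Sf * (∑' k, g k) ^ 2 * (∑' k, h k) ^ 2 :=
    tsum_sq_tripleConv_le_left _ g h
  have h₂ : ∑' l, T₂ l ^ 2 ≤ Sg * (∑' k, f k) ^ 2 * (∑' k, h k) ^ 2 := by
    rw [show T₂ = _ from tripleConv_comm _ _ _]
    exact tsum_sq_tripleConv_le_left _ f h
  have h₃ : ∑' l, T₃ l ^ 2 ≤ Sh * (∑' k, f k) ^ 2 * (∑' k, g k) ^ 2 :=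
    tsum_sq_tripleConv_le_right f g _
  have hT : ∑' l, T₁ l ^ 2 + ∑' l, T₂ l ^ 2 + ∑' l, T₃ l ^ 2 ≤ 3 * K ^ 2 * (Sf * Sg * Sh) := by
    grw [h₁, h₂, h₃, sq_tsum_le_tsum_inv_sobolevWeight_sq_mul s f,
      sq_tsum_le_tsum_inv_sobolevWeight_sq_mul s g, sq_tsum_le_tsum_inv_sobolevWeight_sq_mul s h]
    exact le_of_eq (by ring)
  calc weightedSqSum s (tripleConv f g h)
      ≤ ∑' l, (3 ^ s * (T₁ l + T₂ l + T₃ l)) ^ 2 :=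
        ENNReal.tsum_le_tsum fun l => pow_le_pow_left' (sobolevWeight_mul_tripleConv_le hs f g h l) 2
    _ ≤ ∑' l, (3 ^ s) ^ 2 * (3 * (T₁ l ^ 2 + T₂ l ^ 2 + T₃ l ^ 2)) :=
        ENNReal.tsum_le_tsum fun l => by rw [mul_pow]; gcongr; exact ENNReal.add_add_sq_le _ _ _
    _ = (3 ^ s) ^ 2 * 3 * (∑' l, T₁ l ^ 2 + ∑' l, T₂ l ^ 2 + ∑' l, T₃ l ^ 2) := by
        rw [ENNReal.tsum_mul_left, ENNReal.tsum_mul_left, ENNReal.tsum_add, ENNReal.tsum_add,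
          mul_assoc]
    _ ≤ (3 ^ s) ^ 2 * 3 * (3 * K ^ 2 * (Sf * Sg * Sh)) := by gcongr
    _ = _ := by
        rw [vectorFieldConst, ENNReal.rpow_add _ _ (by norm_num) (by norm_num), ENNReal.rpow_one]
        ring

theorem tripleConv_ne_top (hs : 1 / 2 < s) {f g h : ℤ → ℝ≥0∞} (hf : weightedSqSum s f ≠ ∞)
    (hg : weightedSqSum s g ≠ ∞) (hh : weightedSqSum s h ≠ ∞) (l : ℤ) :
    tripleConv f g h l ≠ ∞ := by
  have hC := vectorFieldConst_ne_top hs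
  have hl : (sobolevWeight s l * tripleConv f g h l) ^ 2 ≠ ∞ :=
    ne_top_of_le_ne_top (by finiteness)
      ((ENNReal.le_tsum l).trans (weightedSqSum_tripleConv_le (by linarith) f g h))
  refine ne_top_of_le_ne_top (by simpa using hl) ?_
  exact le_mul_of_one_le_left' (one_le_sobolevWeight (by linarith) l)

section Sequences

variable {E : Type*} [SeminormedAddGroup E]

noncomputable def sobolevNormSq (s : ℝ) (x : ℤ → E) : ℝ :=
  ∑' k : ℤ, (1 + (k : ℝ) ^ 2) ^ s * ‖x k‖ ^ 2

theorem sobolevNormSq_nonneg (s : ℝ) (x : ℤ → E) : 0 ≤ sobolevNormSq s x :=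
  tsum_nonneg fun _ => by positivity

theorem ofReal_one_add_sq_rpow_mul_norm_sq (s : ℝ) (k : ℤ) (z : E) :
    ENNReal.ofReal ((1 + (k : ℝ) ^ 2) ^ s * ‖z‖ ^ 2) = (sobolevWeight s k * ‖z‖ₑ) ^ 2 := by
  rw [mul_pow, sobolevWeight_sq, ENNReal.ofReal_mul (by positivity),
    ENNReal.ofReal_pow (norm_nonneg _), ofReal_norm]

theorem weightedSqSum_enorm {x : ℤ → E}
    (hx : Summable fun k : ℤ => (1 + (k : ℝ) ^ 2) ^ s * ‖x k‖ ^ 2) :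
    weightedSqSum s (‖x ·‖ₑ) = ENNReal.ofReal (sobolevNormSq s x) := by
  rw [sobolevNormSq, ENNReal.ofReal_tsum_of_nonneg (fun k => by positivity) hx]
  simp_rw [ofReal_one_add_sq_rpow_mul_norm_sq, weightedSqSum]

theorem summable_and_sobolevNormSq_le {x : ℤ → E} {R : ℝ} (hR : 0 ≤ R)
    (h : weightedSqSum s (‖x ·‖ₑ) ≤ ENNReal.ofReal R) :
    (Summable fun k : ℤ => (1 + (k : ℝ) ^ 2) ^ s * ‖x k‖ ^ 2) ∧ sobolevNormSq s x ≤ R := by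
  refine summable_and_tsum_le_of_tsum_ofReal_le (fun k => by positivity) hR ?_
  simpa only [ofReal_one_add_sq_rpow_mul_norm_sq, weightedSqSum] using h

end Sequences

section VectorField

variable {𝕜 : Type*} [NormedDivisionRing 𝕜] {M : ℝ} {c : ℤ → ℤ → ℤ → ℤ → 𝕜}

noncomputable def vectorField (c : ℤ → ℤ → ℤ → ℤ → 𝕜) (a b a' : ℤ → 𝕜) (l : ℤ) : 𝕜 :=
  ∑' p : ℤ × ℤ, c p.1 p.2 (p.1 + p.2 - l) l * a p.1 * b p.2 * a' (p.1 + p.2 - l)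

theorem tsum_enorm_le_ofReal_mul_tripleConv (hc : ∀ i j k l, ‖c i j k l‖ ≤ M)
    (a b a' : ℤ → 𝕜) (l : ℤ) :
    ∑' p : ℤ × ℤ, ‖c p.1 p.2 (p.1 + p.2 - l) l * a p.1 * b p.2 * a' (p.1 + p.2 - l)‖ₑ ≤
      ENNReal.ofReal M * tripleConv (‖a ·‖ₑ) (‖b ·‖ₑ) (‖a' ·‖ₑ) l := by
  rw [tripleConv, ← ENNReal.tsum_mul_left]
  refine ENNReal.tsum_le_tsum fun p => ?_
  simp only [enorm_mul, mul_assoc]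
  gcongr
  rw [← ofReal_norm]
  exact ENNReal.ofReal_le_ofReal (hc _ _ _ _)

theorem summable_norm_vectorField_summand (hs : 1 / 2 < s) (hc : ∀ i j k l, ‖c i j k l‖ ≤ M)
    {a b a' : ℤ → 𝕜} (ha : Summable fun k : ℤ => (1 + (k : ℝ) ^ 2) ^ s * ‖a k‖ ^ 2)
    (hb : Summable fun k : ℤ => (1 + (k : ℝ) ^ 2) ^ s * ‖b k‖ ^ 2)
    (ha' : Summable fun k : ℤ => (1 + (k : ℝ) ^ 2) ^ s * ‖a' k‖ ^ 2) (l : ℤ) :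
    Summable fun p : ℤ × ℤ =>
      ‖c p.1 p.2 (p.1 + p.2 - l) l * a p.1 * b p.2 * a' (p.1 + p.2 - l)‖ := by
  refine tsum_enorm_ne_top_iff_summable_norm.1 <| ne_top_of_le_ne_top ?_
    (tsum_enorm_le_ofReal_mul_tripleConv hc a b a' l)
  refine ENNReal.mul_ne_top ENNReal.ofReal_ne_top (tripleConv_ne_top hs ?_ ?_ ?_ l) <;>
    simp [weightedSqSum_enorm, ha, hb, ha']

theorem weightedSqSum_vectorField_le (hs : 0 ≤ s) (hc : ∀ i j k l, ‖c i j k l‖ ≤ M)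
    (a b a' : ℤ → 𝕜) :
    weightedSqSum s (‖vectorField c a b a' ·‖ₑ) ≤ (vectorFieldConst s * ENNReal.ofReal M) ^ 2 *
      (weightedSqSum s (‖a ·‖ₑ) * weightedSqSum s (‖b ·‖ₑ) * weightedSqSum s (‖a' ·‖ₑ)) := by
  set G := tripleConv (‖a ·‖ₑ) (‖b ·‖ₑ) (‖a' ·‖ₑ)
  calc weightedSqSum s (‖vectorField c a b a' ·‖ₑ)
      ≤ ∑' l, (ENNReal.ofReal M * (sobolevWeight s l * G l)) ^ 2 := by
        refine ENNReal.tsum_le_tsum fun l => pow_le_pow_left' ?_ 2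
        rw [mul_left_comm]
        gcongr
        exact enorm_tsum_le_tsum_enorm.trans (tsum_enorm_le_ofReal_mul_tripleConv hc a b a' l)
    _ = ENNReal.ofReal M ^ 2 * weightedSqSum s G := by
        simp_rw [mul_pow _ (_ * _)]
        exact ENNReal.tsum_mul_left
    _ ≤ _ := by
        grw [weightedSqSum_tripleConv_le hs]
        exact le_of_eq (by ring)

theorem summable_and_sobolevNormSq_vectorField_le (hs : 1 / 2 < s) (hM : 0 ≤ M)
    (hc : ∀ i j k l, ‖c i j k l‖ ≤ M) {a b a' : ℤ → 𝕜}
    (ha : Summable fun k : ℤ => (1 + (k : ℝ) ^ 2) ^ s * ‖a k‖ ^ 2)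
    (hb : Summable fun k : ℤ => (1 + (k : ℝ) ^ 2) ^ s * ‖b k‖ ^ 2)
    (ha' : Summable fun k : ℤ => (1 + (k : ℝ) ^ 2) ^ s * ‖a' k‖ ^ 2) :
    (Summable fun l : ℤ => (1 + (l : ℝ) ^ 2) ^ s * ‖vectorField c a b a' l‖ ^ 2) ∧
      sobolevNormSq s (vectorField c a b a') ≤ ((vectorFieldConst s).toReal * M) ^ 2 *
        (sobolevNormSq s a * sobolevNormSq s b * sobolevNormSq s a') := by
  have hα := sobolevNormSq_nonneg s a
  have hβ := sobolevNormSq_nonneg s b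
  have hγ := sobolevNormSq_nonneg s a'
  refine summable_and_sobolevNormSq_le (by positivity) <|
    (weightedSqSum_vectorField_le (by linarith) hc a b a').trans_eq ?_
  rw [weightedSqSum_enorm ha, weightedSqSum_enorm hb, weightedSqSum_enorm ha',
    ENNReal.ofReal_mul (by positivity), ENNReal.ofReal_mul (by positivity), ENNReal.ofReal_mul hα,
    ENNReal.ofReal_pow (by positivity), ENNReal.ofReal_mul (by positivity),
    ENNReal.ofReal_toReal (vectorFieldConst_ne_top hs)]

end VectorField

end QuarticVectorField

open QuarticVectorField in
/-- Let `s > 1/2` and `M ≥ 0`, and let `c : ℤ⁴ → ℂ` vanish off the zero-momentum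
set `i + j = k + ℓ` and be bounded by `M`. There is a constant `C_s > 0` depending only on `s`
such that for all `a, b, a' ∈ ℓ²_s`, the sums
`w_ℓ = ∑_{i + j = k + ℓ} c(i,j,k,ℓ) a_i b_j a'_k` converge absolutely, `w ∈ ℓ²_s`, and
`‖w‖_s ≤ C_s M ‖a‖_s ‖b‖_s ‖a'‖_s`.  (The inner sum is parametrized by `(i, j) ∈ ℤ²` with
`k = i + j - ℓ`.) -/
theorem quartic_vectorfield_bound (s : ℝ) (hs : 1 / 2 < s) :
    ∃ C : ℝ, 0 < C ∧ ∀ (M : ℝ), 0 ≤ M →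
      ∀ c : ℤ → ℤ → ℤ → ℤ → ℂ,
        (∀ i j k l : ℤ, i + j ≠ k + l → c i j k l = 0) →
        (∀ i j k l : ℤ, ‖c i j k l‖ ≤ M) →
        ∀ a b a' : ℤ → ℂ,
          Summable (fun k : ℤ => (1 + (k : ℝ) ^ 2) ^ s * ‖a k‖ ^ 2) →
          Summable (fun k : ℤ => (1 + (k : ℝ) ^ 2) ^ s * ‖b k‖ ^ 2) →
          Summable (fun k : ℤ => (1 + (k : ℝ) ^ 2) ^ s * ‖a' k‖ ^ 2) →
          (∀ l : ℤ, Summable (fun p : ℤ × ℤ =>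
              ‖c p.1 p.2 (p.1 + p.2 - l) l * a p.1 * b p.2 * a' (p.1 + p.2 - l)‖)) ∧
          Summable (fun l : ℤ => (1 + (l : ℝ) ^ 2) ^ s *
              ‖∑' p : ℤ × ℤ, c p.1 p.2 (p.1 + p.2 - l) l * a p.1 * b p.2 * a' (p.1 + p.2 - l)‖ ^ 2) ∧
          Real.sqrt (∑' l : ℤ, (1 + (l : ℝ) ^ 2) ^ s *
              ‖∑' p : ℤ × ℤ, c p.1 p.2 (p.1 + p.2 - l) l * a p.1 * b p.2 * a' (p.1 + p.2 - l)‖ ^ 2) ≤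
            C * M * Real.sqrt (∑' k : ℤ, (1 + (k : ℝ) ^ 2) ^ s * ‖a k‖ ^ 2) *
              Real.sqrt (∑' k : ℤ, (1 + (k : ℝ) ^ 2) ^ s * ‖b k‖ ^ 2) *
              Real.sqrt (∑' k : ℤ, (1 + (k : ℝ) ^ 2) ^ s * ‖a' k‖ ^ 2) := by
  refine ⟨(vectorFieldConst s).toReal,
    ENNReal.toReal_pos (vectorFieldConst_ne_zero s) (vectorFieldConst_ne_top hs), ?_⟩
  intro M hM c _ hc a b a' ha hb ha'
  obtain ⟨hsum, hle⟩ := summable_and_sobolevNormSq_vectorField_le hs hM hc ha hb ha'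
  refine ⟨summable_norm_vectorField_summand hs hc ha hb ha', hsum,
    (Real.sqrt_le_sqrt hle).trans_eq ?_⟩
  rw [Real.sqrt_mul (by positivity), Real.sqrt_sq (by positivity),
    Real.sqrt_mul (mul_nonneg (sobolevNormSq_nonneg s a) (sobolevNormSq_nonneg s b)),
    Real.sqrt_mul (sobolevNormSq_nonneg s a)]
  simp only [sobolevNormSq]
  ring
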